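/- arXiv:math/0610471 — 2 statements merged into one kernel-verified Lean document; each statement's English description precedes it below -/
import Mathlib

section
/- For a positive integer n and complex parameters c, d such that all Gamma values involved are defined, det[ Γ(d+k−j)/Γ(c+k−j) ]_{0≤j,k≤n−1} = ∏_{j=0}^{n−1} j! · (Γ(1+d−c)/Γ(1+d−c−j)) · (Γ(d−n+1+j)/Γ(c+j)). -/
open Complex Finset

section Aux

lemma Gamma_shift (z : ℂ) (k : ℕ) (h : ∀ i < k, z + i ≠ 0) :
    Complex.Gamma (z + k) = Complex.Gamma z * ∏ i ∈ range k, (z + i) := by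
  induction k with
  | zero => simp
  | succ k ih =>
    have h1 : z + k ≠ 0 := h k (Nat.lt_succ_self k)
    have : z + (k+1 : ℕ) = (z + k) + 1 := by push_cast; ring
    rw [this, Complex.Gamma_add_one _ h1, ih (fun i hi => h i (hi.trans (Nat.lt_succ_self k))),
      prod_range_succ]
    ring

variable (n : ℕ) (x a b : ℕ → ℂ)

/-- intermediate matrix after `r` rounds of column reduction -/
private def Mr (r : ℕ) : Matrix (Fin n) (Fin n) ℂ :=
  fun j k => (∏ i ∈ range (k : ℕ), (x j + a i)) * ∏ i ∈ Ico ((k : ℕ) + r) (n - 1), (x j + b i)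

private lemma step (r : ℕ) :
    (Mr n x a b r).det =
      (∏ k ∈ range (n - 1 - r), (b (k + r) - a k)) * (Mr n x a b (r + 1)).det := by
  classical
  set E : Matrix (Fin n) (Fin n) ℂ :=
    fun k' k => (if k' = k then 1 else 0) +
      (if (k' : ℕ) = (k : ℕ) + 1 ∧ (k : ℕ) < n - 1 - r then -1 else 0) with hE
  have hEdet : E.det = 1 := by
    rw [Matrix.det_of_lowerTriangular E]
    · simp [hE]
    · intro i j hij
      simp only [hE]
      have h1 : ¬ (i = j) := by intro h; subst h; exact lt_irrefl _ (by exact_mod_cast hij)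
      have h2 : ¬ ((i : ℕ) = (j : ℕ) + 1 ∧ (j : ℕ) < n - 1 - r) := by
        rintro ⟨h, -⟩
        have : (i : ℕ) < (j : ℕ) := by exact_mod_cast hij
        omega
      rw [if_neg h1, if_neg h2]; ring
  have hmul : Mr n x a b r * E =
      fun j k : Fin n => (if (k : ℕ) < n - 1 - r then b ((k : ℕ) + r) - a (k : ℕ) else 1) *
        Mr n x a b (r + 1) j k := by
    ext j k
    rw [Matrix.mul_apply]
    simp only [hE, mul_add]
    rw [Finset.sum_add_distrib]
    have e1 : (∑ k' : Fin n, Mr n x a b r j k' * if k' = k then 1 else 0) = Mr n x a b r j k := by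
      simp [Finset.sum_ite_eq']
    rw [e1]
    by_cases hk : (k : ℕ) < n - 1 - r
    · have hk1 : (k : ℕ) + 1 < n := by omega
      have e2 : (∑ k' : Fin n, Mr n x a b r j k' *
          if (k' : ℕ) = (k : ℕ) + 1 ∧ (k : ℕ) < n - 1 - r then -1 else 0)
          = - Mr n x a b r j ⟨(k : ℕ) + 1, hk1⟩ := by
        rw [Finset.sum_eq_single (⟨(k : ℕ) + 1, hk1⟩ : Fin n)]
        · rw [if_pos ⟨rfl, hk⟩]; ring
        · intro k' _ hne
          have : ¬ ((k' : ℕ) = (k : ℕ) + 1 ∧ (k : ℕ) < n - 1 - r) := by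
            rintro ⟨h, -⟩
            exact hne (Fin.ext h)
          rw [if_neg this, mul_zero]
        · intro h; exact absurd (Finset.mem_univ _) h
      rw [e2, if_pos hk]
      -- now the entry identity
      have hlt : (k : ℕ) + r < n - 1 := by omega
      show Mr n x a b r j k + - Mr n x a b r j ⟨(k : ℕ) + 1, hk1⟩
          = (b ((k : ℕ) + r) - a (k : ℕ)) * Mr n x a b (r + 1) j k
      simp only [Mr]
      rw [Finset.prod_eq_prod_Ico_succ_bot hlt (fun i => x j + b i)]
      rw [Finset.prod_range_succ, show (k : ℕ) + 1 + r = (k : ℕ) + r + 1 by ring,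
        show (k : ℕ) + (r + 1) = (k : ℕ) + r + 1 from rfl]
      ring
    · have e2 : (∑ k' : Fin n, Mr n x a b r j k' *
          if (k' : ℕ) = (k : ℕ) + 1 ∧ (k : ℕ) < n - 1 - r then -1 else 0) = 0 := by
        apply Finset.sum_eq_zero
        intro k' _
        rw [if_neg (by tauto), mul_zero]
      rw [e2, if_neg hk, add_zero, one_mul]
      have hge : n - 1 ≤ (k : ℕ) + r := by omega
      simp only [Mr]
      rw [Ico_eq_empty (by omega), Ico_eq_empty (by omega)]
  have : (Mr n x a b r).det = (Mr n x a b r * E).det := by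
    rw [Matrix.det_mul, hEdet, mul_one]
  rw [this, hmul]
  refine Eq.trans (Matrix.det_mul_row (fun k : Fin n => if (k : ℕ) < n - 1 - r then
    b ((k : ℕ) + r) - a (k : ℕ) else 1) (Mr n x a b (r + 1))) ?_
  congr 1
  rw [Fin.prod_univ_eq_prod_range (fun k => if k < n - 1 - r then b (k + r) - a k else 1) n]
  rw [← Finset.prod_subset (Finset.range_subset_range.2 (by omega : n - 1 - r ≤ n))
    (fun i _ hni => if_neg (by simp at hni ⊢; omega))]
  apply Finset.prod_congr rfl
  intro i hi
  rw [if_pos (Finset.mem_range.1 hi)]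

private lemma red : ∀ t s, s + t = n - 1 →
    (Mr n x a b s).det =
      (∏ r ∈ Ico s (n - 1), ∏ k ∈ range (n - 1 - r), (b (k + r) - a k)) *
        (Mr n x a b (n - 1)).det := by
  intro t
  induction t with
  | zero =>
    intro s hs
    rw [Nat.add_zero] at hs; subst hs
    simp
  | succ t ih =>
    intro s hs
    have hslt : s < n - 1 := by omega
    rw [step n x a b s, ih (s + 1) (by omega),
      Finset.prod_eq_prod_Ico_succ_bot hslt (fun r => ∏ k ∈ range (n - 1 - r), (b (k + r) - a k))]
    ring

private lemma Mlast : (Mr n x a b (n - 1)).det = (Matrix.vandermonde (fun j : Fin n => x j)).det := by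
  have hM : Mr n x a b (n - 1) = fun j k : Fin n => ∏ i ∈ range (k : ℕ), (x j + a i) := by
    ext j k
    simp only [Mr]
    rw [Ico_eq_empty (by omega), Finset.prod_empty, mul_one]
  rw [hM]
  rw [Matrix.det_eval_matrixOfPolynomials_eq_det_vandermonde (fun j : Fin n => x j)
    (fun k : Fin n => ∏ i ∈ range (k : ℕ), (Polynomial.X + Polynomial.C (a i)))
    (fun k => by
      rw [Polynomial.natDegree_prod_of_monic _ _ (fun i _ => Polynomial.monic_X_add_C _)]
      simp [Polynomial.natDegree_X_add_C]
    )
    (fun k => Polynomial.monic_prod_of_monic _ _ (fun i _ => Polynomial.monic_X_add_C _))]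
  congr 1
  ext j k
  simp [Polynomial.eval_prod]

private lemma lemK :
    (Mr n x a b 0).det =
      (∏ r ∈ range (n - 1), ∏ k ∈ range (n - 1 - r), (b (k + r) - a k)) *
        (Matrix.vandermonde (fun j : Fin n => x j)).det := by
  rw [red n x a b (n - 1) 0 (by omega), Mlast, Finset.range_eq_Ico]

private lemma P1 (g : ℕ → ℂ) : ∀ n : ℕ,
    ∏ j ∈ range n, ∏ s ∈ range j, g s = ∏ r ∈ range (n - 1), ∏ k ∈ range (n - 1 - r), g r := by
  intro n
  induction n with
  | zero => simp
  | succ n ih =>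
    rw [Finset.prod_range_succ, ih, Nat.add_sub_cancel]
    rcases Nat.eq_zero_or_pos n with h | h
    · subst h; simp
    · have h1 : ∀ r ∈ range n, ∏ _k ∈ range (n - r), g r
          = (∏ _k ∈ range (n - 1 - r), g r) * g r := by
        intro r hr
        have : n - r = (n - 1 - r) + 1 := by
          have := Finset.mem_range.1 hr; omega
        rw [this, Finset.prod_range_succ]
      rw [Finset.prod_congr rfl h1, Finset.prod_mul_distrib]
      congr 1
      rw [show n = (n - 1) + 1 by omega, Finset.prod_range_succ]
      simp

private lemma P2 : ∀ m : ℕ, ∏ j : Fin (m + 1), ((Nat.factorial (j : ℕ) : ℂ)) =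
    (Nat.superFactorial m : ℂ) := by
  intro m
  induction m with
  | zero => simp
  | succ m ih =>
    rw [Fin.prod_univ_castSucc]
    simp only [Fin.coe_castSucc, Fin.val_last]
    rw [ih, Nat.superFactorial]
    push_cast
    ring

private lemma P3 (m : ℕ) :
    (Matrix.vandermonde (fun j : Fin (m + 1) => ((j : ℕ) : ℂ))).det
      = ∏ j : Fin (m + 1), ((Nat.factorial (j : ℕ) : ℂ)) := by
  rw [P2, ← Matrix.det_vandermonde_id_eq_superFactorial (R := ℂ) m]

private lemma refl_prod (m : ℕ) (f : ℕ → ℂ) :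
    ∏ j : Fin (m + 1), f (j : ℕ) = ∏ j : Fin (m + 1), f (m - (j : ℕ)) := by
  rw [Fin.prod_univ_eq_prod_range (fun i => f i), Fin.prod_univ_eq_prod_range
    (fun i => f (m - i)), ← Finset.prod_range_reflect]
  apply Finset.prod_congr rfl
  intro i hi
  simp only [Finset.mem_range] at hi
  congr 1

end Aux

/-- Gamma-ratio determinant identity (Normand):
`det[Γ(d+k−j)/Γ(c+k−j)] = ∏ j! Γ(1+d−c)/Γ(1+d−c−j) · Γ(d−n+1+j)/Γ(c+j)`,
for generic parameters so that no Gamma function is evaluated at a pole. -/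
theorem gamma_ratio_det (n : ℕ) (hn : 0 < n) (c d : ℂ)
    (hc : ∀ j k : Fin n, ∀ m : ℕ, c + (k : ℂ) - (j : ℂ) ≠ -(m : ℂ))
    (hd : ∀ j k : Fin n, ∀ m : ℕ, d + (k : ℂ) - (j : ℂ) ≠ -(m : ℂ))
    (hdc : ∀ j : Fin n, ∀ m : ℕ, 1 + d - c - (j : ℂ) ≠ -(m : ℂ))
    (hdn : ∀ j : Fin n, ∀ m : ℕ, d - (n : ℂ) + 1 + (j : ℂ) ≠ -(m : ℂ))
    (hcj : ∀ j : Fin n, ∀ m : ℕ, c + (j : ℂ) ≠ -(m : ℂ)) :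
    Matrix.det (fun j k : Fin n =>
        Complex.Gamma (d + (k : ℂ) - (j : ℂ)) / Complex.Gamma (c + (k : ℂ) - (j : ℂ))) =
    ∏ j : Fin n, ((Nat.factorial j : ℂ) *
      (Complex.Gamma (1 + d - c) / Complex.Gamma (1 + d - c - (j : ℂ))) *
      (Complex.Gamma (d - (n : ℂ) + 1 + (j : ℂ)) / Complex.Gamma (c + (j : ℂ)))) := by
  obtain ⟨m, rfl⟩ : ∃ m, n = m + 1 := ⟨n - 1, by omega⟩
  clear hn hdn hcj
  set x : ℕ → ℂ := fun t => (t : ℂ) with hx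
  set a : ℕ → ℂ := fun i => -d - (i : ℂ) with ha
  set b : ℕ → ℂ := fun i => -c - (i : ℂ) with hb
  -- nonvanishing facts
  have hcne : ∀ i : ℕ, i ≤ m → ∀ j : Fin (m+1), c + (i : ℂ) - (j : ℂ) ≠ 0 := by
    intro i hi j
    have := hc j ⟨i, by omega⟩ 0
    simpa using this
  have hdne : ∀ i : ℕ, i ≤ m → ∀ j : Fin (m+1), d + (i : ℂ) - (j : ℂ) ≠ 0 := by
    intro i hi j
    have := hd j ⟨i, by omega⟩ 0
    simpa using this
  have hGcm : ∀ j : Fin (m+1), Complex.Gamma (c + (m : ℂ) - (j : ℂ)) ≠ 0 := by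
    intro j
    apply Complex.Gamma_ne_zero
    intro mm
    have := hc j ⟨m, by omega⟩ mm
    simpa using this
  have hGck : ∀ j k : Fin (m+1), Complex.Gamma (c + (k : ℂ) - (j : ℂ)) ≠ 0 := by
    intro j k
    exact Complex.Gamma_ne_zero (fun mm => hc j k mm)
  -- entry identity
  have entry : ∀ j k : Fin (m+1),
      Complex.Gamma (d + (k : ℂ) - (j : ℂ)) / Complex.Gamma (c + (k : ℂ) - (j : ℂ))
        = ((-1:ℂ)^m * (Complex.Gamma (d - (j : ℂ)) / Complex.Gamma (c + (m : ℂ) - (j : ℂ))))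
          * Mr (m+1) x a b 0 j k := by
    intro j k
    have hkm : (k : ℕ) ≤ m := by omega
    have hGd : Complex.Gamma (d + (k : ℂ) - (j : ℂ))
        = Complex.Gamma (d - (j : ℂ)) * ∏ i ∈ range (k : ℕ), (d + (i : ℂ) - (j : ℂ)) := by
      have hnv : ∀ i < (k : ℕ), d - (j : ℂ) + (i : ℂ) ≠ 0 := by
        intro i hi h0
        exact hdne i (by omega) j (by linear_combination h0)
      have h := Gamma_shift (d - (j : ℂ)) (k : ℕ) hnv
      rw [show d - (j : ℂ) + ((k : ℕ) : ℂ) = d + (k : ℂ) - (j : ℂ) by ring] at h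
      rw [h]
      exact congrArg _ (Finset.prod_congr rfl fun i _ => by ring)
    have hGc : Complex.Gamma (c + (m : ℂ) - (j : ℂ))
        = Complex.Gamma (c + (k : ℂ) - (j : ℂ)) * ∏ i ∈ Ico (k : ℕ) m, (c + (i : ℂ) - (j : ℂ)) := by
      have hnv : ∀ i < m - (k : ℕ), c + (k : ℂ) - (j : ℂ) + (i : ℂ) ≠ 0 := by
        intro i hi h0
        refine hcne ((k : ℕ) + i) (by omega) j ?_
        push_cast
        push_cast at h0
        linear_combination h0
      have h := Gamma_shift (c + (k : ℂ) - (j : ℂ)) (m - (k : ℕ)) hnv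
      rw [show c + (k : ℂ) - (j : ℂ) + ((m - (k : ℕ) : ℕ) : ℂ) = c + (m : ℂ) - (j : ℂ) by
        push_cast [Nat.cast_sub hkm]; ring] at h
      rw [h]
      refine congrArg _ ?_
      rw [Finset.prod_Ico_eq_prod_range]
      exact Finset.prod_congr rfl fun i _ => by push_cast; ring
    have hPc_ne : (∏ i ∈ Ico (k : ℕ) m, (c + (i : ℂ) - (j : ℂ))) ≠ 0 := by
      apply Finset.prod_ne_zero_iff.2
      intro i hi
      exact hcne i (by simp at hi; omega) j
    have hPd : ∏ i ∈ range (k : ℕ), (x (j : ℕ) + a i)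
        = (-1:ℂ)^(k : ℕ) * ∏ i ∈ range (k : ℕ), (d + (i : ℂ) - (j : ℂ)) := by
      rw [show (∏ i ∈ range (k : ℕ), (x (j : ℕ) + a i))
          = ∏ i ∈ range (k : ℕ), ((-1) * (d + (i : ℂ) - (j : ℂ))) from
        Finset.prod_congr rfl fun i _ => by simp only [hx, ha]; ring]
      rw [Finset.prod_mul_distrib, Finset.prod_const, Finset.card_range]
    have hPb : ∏ i ∈ Ico (k : ℕ) m, (x (j : ℕ) + b i)
        = (-1:ℂ)^(m - (k : ℕ)) * ∏ i ∈ Ico (k : ℕ) m, (c + (i : ℂ) - (j : ℂ)) := by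
      rw [show (∏ i ∈ Ico (k : ℕ) m, (x (j : ℕ) + b i))
          = ∏ i ∈ Ico (k : ℕ) m, ((-1) * (c + (i : ℂ) - (j : ℂ))) from
        Finset.prod_congr rfl fun i _ => by simp only [hx, hb]; ring]
      rw [Finset.prod_mul_distrib, Finset.prod_const, Nat.card_Ico]
    have hsign : ((-1:ℂ))^(k : ℕ) * ((-1:ℂ))^(m - (k : ℕ)) * ((-1:ℂ))^m = 1 := by
      rw [← pow_add, Nat.add_sub_cancel' hkm, ← pow_add]
      exact Even.neg_one_pow ⟨m, rfl⟩
    show _ = _ * ((∏ i ∈ range (k : ℕ), (x (j : ℕ) + a i))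
        * ∏ i ∈ Ico ((k : ℕ) + 0) (m + 1 - 1), (x (j : ℕ) + b i))
    simp only [Nat.add_zero, Nat.add_sub_cancel]
    rw [hPd, hPb, hGd, hGc]
    set Gd := Complex.Gamma (d - (j : ℂ))
    set Gck := Complex.Gamma (c + (k : ℂ) - (j : ℂ))
    set Pd := ∏ i ∈ range (k : ℕ), (d + (i : ℂ) - (j : ℂ))
    set Pc := ∏ i ∈ Ico (k : ℕ) m, (c + (i : ℂ) - (j : ℂ))
    have hne1 : Gck ≠ 0 := hGck j k
    calc Gd * Pd / Gck
        = ((-1:ℂ)^(k : ℕ) * (-1:ℂ)^(m - (k : ℕ)) * (-1:ℂ)^m) * (Gd * Pd / Gck) := by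
          rw [hsign, one_mul]
      _ = (-1:ℂ)^m * (Gd / (Gck * Pc)) * (((-1:ℂ)^(k : ℕ) * Pd) * ((-1:ℂ)^(m - (k : ℕ)) * Pc)) := by
          field_simp
  -- rewrite matrix and apply det lemmas
  have hM : (fun j k : Fin (m+1) =>
      Complex.Gamma (d + (k : ℂ) - (j : ℂ)) / Complex.Gamma (c + (k : ℂ) - (j : ℂ)))
      = Matrix.of (fun j k : Fin (m+1) =>
        ((-1:ℂ)^m * (Complex.Gamma (d - (j : ℂ)) / Complex.Gamma (c + (m : ℂ) - (j : ℂ))))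
          * Mr (m+1) x a b 0 j k) := by
    ext j k
    exact entry j k
  rw [hM, Matrix.det_mul_column, lemK]
  -- the sign product collapses
  have hv : (∏ j : Fin (m+1), ((-1:ℂ)^m *
      (Complex.Gamma (d - (j : ℂ)) / Complex.Gamma (c + (m : ℂ) - (j : ℂ)))))
      = ∏ j : Fin (m+1), (Complex.Gamma (d - (j : ℂ)) / Complex.Gamma (c + (m : ℂ) - (j : ℂ))) := by
    rw [Finset.prod_mul_distrib, Finset.prod_const, Finset.card_univ, Fintype.card_fin,
      ← pow_mul, Even.neg_one_pow (Nat.even_mul_succ_self m), one_mul]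
  -- the (b - a) factor equals the product of Gamma(1+d-c)-ratios
  have hF : (∏ r ∈ range (m + 1 - 1), ∏ k ∈ range (m + 1 - 1 - r), (b (k + r) - a k))
      = ∏ j : Fin (m+1),
        (Complex.Gamma (1 + d - c) / Complex.Gamma (1 + d - c - (j : ℂ))) := by
    have e0 : (∏ r ∈ range (m + 1 - 1), ∏ k ∈ range (m + 1 - 1 - r), (b (k + r) - a k))
        = ∏ r ∈ range (m + 1 - 1), ∏ k ∈ range (m + 1 - 1 - r), (d - c - (r : ℂ)) := by
      refine Finset.prod_congr rfl fun r _ => Finset.prod_congr rfl fun k _ => ?_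
      simp only [ha, hb]
      push_cast
      ring
    rw [e0, ← P1 (fun s => d - c - (s : ℂ)) (m + 1),
      Fin.prod_univ_eq_prod_range (fun jv =>
        Complex.Gamma (1 + d - c) / Complex.Gamma (1 + d - c - (jv : ℂ))) (m + 1)]
    refine Finset.prod_congr rfl fun jv hjv => ?_
    rw [Finset.mem_range] at hjv
    have hnv : ∀ i < jv, 1 + d - c - (jv : ℂ) + (i : ℂ) ≠ 0 := by
      intro i hi h0
      refine hdc ⟨jv - i, by omega⟩ 0 ?_
      simp only [Fin.val_mk, Nat.cast_sub (le_of_lt hi)]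
      push_cast
      push_cast at h0
      linear_combination h0
    have h := Gamma_shift (1 + d - c - (jv : ℂ)) jv hnv
    rw [show 1 + d - c - (jv : ℂ) + ((jv : ℕ) : ℂ) = 1 + d - c by push_cast; ring] at h
    have hne : Complex.Gamma (1 + d - c - (jv : ℂ)) ≠ 0 := by
      apply Complex.Gamma_ne_zero
      intro mm
      have := hdc ⟨jv, hjv⟩ mm
      simpa using this
    rw [h, mul_div_cancel_left₀ _ hne]
    rw [← Finset.prod_range_reflect (fun i => 1 + d - c - (jv : ℂ) + (i : ℂ)) jv]
    refine Finset.prod_congr rfl fun s hs => ?_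
    rw [Finset.mem_range] at hs
    have hcast : ((jv - 1 - s : ℕ) : ℂ) = (jv : ℂ) - 1 - (s : ℂ) := by
      push_cast [Nat.cast_sub (by omega : 1 ≤ jv), Nat.cast_sub (by omega : s ≤ jv - 1)]
      ring
    show d - c - (s : ℂ) = 1 + d - c - (jv : ℂ) + ((jv - 1 - s : ℕ) : ℂ)
    rw [hcast]
    ring
  -- the Gamma-ratio row factors, reflected
  have hr2 : (∏ j : Fin (m+1),
      (Complex.Gamma (d - (j : ℂ)) / Complex.Gamma (c + (m : ℂ) - (j : ℂ))))
      = ∏ j : Fin (m+1),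
        (Complex.Gamma (d - ((m + 1 : ℕ) : ℂ) + 1 + (j : ℂ)) / Complex.Gamma (c + (j : ℂ))) := by
    rw [refl_prod m (fun t => Complex.Gamma (d - (t : ℂ)) / Complex.Gamma (c + (m : ℂ) - (t : ℂ)))]
    refine Finset.prod_congr rfl fun j _ => ?_
    have hj : (j : ℕ) ≤ m := by omega
    have hcast : ((m - (j : ℕ) : ℕ) : ℂ) = (m : ℂ) - ((j : ℕ) : ℂ) := by
      push_cast [Nat.cast_sub hj]; ring
    congr 1
    · congr 1
      rw [hcast]
      push_cast
      ring
    · congr 1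
      rw [hcast]
      ring
  rw [hv, hF]
  simp only [hx]
  rw [P3, hr2, Finset.prod_mul_distrib, Finset.prod_mul_distrib]
  ring
end

section
/- For a positive integer n, a complex number b, and an arbitrary sequence z₀,…,z_{n−1} of complex numbers (generic so all Gamma values are defined), det[ Γ(z_k+b−j)/Γ(z_k−j) ]_{0≤j,k≤n−1} = ∏_{0≤j<k≤n−1}(z_k−z_j) · ∏_{j=0}^{n−1} (−1)^j·(−b)_j·Γ(z_j+b−n+1)/Γ(z_j), where (−b)_j denotes the Pochhammer symbol. -/
open Complex Finset

lemma gamma_shift (w : ℂ) (d : ℕ) (h : ∀ i : ℕ, i < d → w + i ≠ 0) :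
    Complex.Gamma (w + d) = (∏ i ∈ Finset.range d, (w + i)) * Complex.Gamma w := by
  induction d with
  | zero => simp
  | succ d ih =>
    have e : w + ((d+1 : ℕ) : ℂ) = (w + d) + 1 := by push_cast; ring
    rw [e, Complex.Gamma_add_one _ (h d (by omega)), ih (fun i hi => h i (by omega)),
      Finset.prod_range_succ]
    ring

lemma key_sum (N : ℕ) : ∀ (b y : ℂ),
    ∑ t ∈ Finset.range (N+1), ((-1:ℂ))^t * (N.choose t : ℂ) *
      ((∏ s ∈ Finset.range (N-t), (y + b - ((t:ℂ)+1+(s:ℂ)))) *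
        ∏ m ∈ Finset.range t, (y - ((m:ℂ)+1)))
    = ∏ i ∈ Finset.range N, (b - (i:ℂ)) := by
  induction N with
  | zero => simp
  | succ N ih =>
    intro b y
    set A : ℕ → ℂ := fun t => ∏ s ∈ Finset.range (N+1-t), (y + b - ((t:ℂ)+1+(s:ℂ))) with hA
    set B : ℕ → ℂ := fun t => ∏ m ∈ Finset.range t, (y - ((m:ℂ)+1)) with hB
    have hAB : ∀ t, t ≤ N → A t * B t - A (t+1) * B (t+1) = b * (A (t+1) * B t) := by
      intro t ht
      have h1 : A t = (∏ s ∈ Finset.range (N-t), (y + b - ((t:ℂ)+1+((s:ℂ)+1)))) *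
          (y + b - ((t:ℂ)+1+(0:ℂ))) := by
        simp only [hA]
        have e : N + 1 - t = (N - t) + 1 := by omega
        rw [e, Finset.prod_range_succ']
        congr 1
        · exact Finset.prod_congr rfl fun s _ => by push_cast; ring_nf
        · norm_num
      have h2 : A (t+1) = ∏ s ∈ Finset.range (N-t), (y + b - ((t:ℂ)+1+((s:ℂ)+1))) := by
        simp only [hA]
        have e : N + 1 - (t+1) = N - t := by omega
        rw [e]
        exact Finset.prod_congr rfl fun s _ => by push_cast; ring_nf
      have h3 : B (t+1) = B t * (y - ((t:ℂ)+1)) := by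
        simp only [hB]
        rw [Finset.prod_range_succ]
      rw [h1, ← h2, h3]
      ring
    show ∑ t ∈ Finset.range (N+1+1), (-1:ℂ)^t * (((N+1).choose t : ℕ) : ℂ) * (A t * B t)
        = ∏ i ∈ Finset.range (N+1), (b - (i:ℂ))
    have e1 : ∀ t ∈ Finset.range (N+1),
        (-1:ℂ)^(t+1) * (((N+1).choose (t+1) : ℕ) : ℂ) * (A (t+1) * B (t+1))
        = (-1:ℂ)^(t+1) * ((N.choose (t+1) : ℕ) : ℂ) * (A (t+1) * B (t+1))
          - (-1:ℂ)^t * ((N.choose t : ℕ) : ℂ) * (A (t+1) * B (t+1)) := by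
      intro t _
      rw [Nat.choose_succ_succ]
      push_cast
      ring
    calc ∑ t ∈ Finset.range (N+1+1), (-1:ℂ)^t * (((N+1).choose t : ℕ) : ℂ) * (A t * B t)
        = (∑ t ∈ Finset.range (N+1),
            (-1:ℂ)^(t+1) * (((N+1).choose (t+1) : ℕ) : ℂ) * (A (t+1) * B (t+1)))
          + (-1:ℂ)^0 * (((N+1).choose 0 : ℕ) : ℂ) * (A 0 * B 0) :=
          Finset.sum_range_succ' _ (N+1)
      _ = (∑ t ∈ Finset.range (N+1),
            ((-1:ℂ)^(t+1) * ((N.choose (t+1) : ℕ) : ℂ) * (A (t+1) * B (t+1))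
              - (-1:ℂ)^t * ((N.choose t : ℕ) : ℂ) * (A (t+1) * B (t+1))))
          + (-1:ℂ)^0 * ((N.choose 0 : ℕ) : ℂ) * (A 0 * B 0) := by
          rw [Finset.sum_congr rfl e1]; norm_num
      _ = ((∑ t ∈ Finset.range (N+1),
            (-1:ℂ)^(t+1) * ((N.choose (t+1) : ℕ) : ℂ) * (A (t+1) * B (t+1)))
          + (-1:ℂ)^0 * ((N.choose 0 : ℕ) : ℂ) * (A 0 * B 0))
          - ∑ t ∈ Finset.range (N+1),
            (-1:ℂ)^t * ((N.choose t : ℕ) : ℂ) * (A (t+1) * B (t+1)) := by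
          rw [Finset.sum_sub_distrib]; ring
      _ = (∑ t ∈ Finset.range (N+1+1), (-1:ℂ)^t * ((N.choose t : ℕ) : ℂ) * (A t * B t))
          - ∑ t ∈ Finset.range (N+1),
            (-1:ℂ)^t * ((N.choose t : ℕ) : ℂ) * (A (t+1) * B (t+1)) := by
          rw [Finset.sum_range_succ' (fun t => (-1:ℂ)^t * ((N.choose t : ℕ) : ℂ) * (A t * B t)) (N+1)]
      _ = (∑ t ∈ Finset.range (N+1), (-1:ℂ)^t * ((N.choose t : ℕ) : ℂ) * (A t * B t))
          - ∑ t ∈ Finset.range (N+1),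
            (-1:ℂ)^t * ((N.choose t : ℕ) : ℂ) * (A (t+1) * B (t+1)) := by
          rw [Finset.sum_range_succ]
          simp [Nat.choose_succ_self]
      _ = ∑ t ∈ Finset.range (N+1),
            (-1:ℂ)^t * ((N.choose t : ℕ) : ℂ) * (A t * B t - A (t+1) * B (t+1)) := by
          rw [← Finset.sum_sub_distrib]
          exact Finset.sum_congr rfl fun t _ => by ring
      _ = b * ∑ t ∈ Finset.range (N+1),
            (-1:ℂ)^t * ((N.choose t : ℕ) : ℂ) * (A (t+1) * B t) := by
          rw [Finset.mul_sum]
          refine Finset.sum_congr rfl fun t htm => ?_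
          rw [hAB t (by simpa using Nat.lt_succ_iff.mp (Finset.mem_range.mp htm))]
          ring
      _ = b * ∑ t ∈ Finset.range (N+1),
            (-1:ℂ)^t * ((N.choose t : ℕ) : ℂ) *
              ((∏ s ∈ Finset.range (N-t), (y + (b-1) - ((t:ℂ)+1+(s:ℂ)))) *
                ∏ m ∈ Finset.range t, (y - ((m:ℂ)+1))) := by
          congr 1
          refine Finset.sum_congr rfl fun t _ => ?_
          congr 1
          simp only [hA, hB]
          congr 1
          have e : N + 1 - (t+1) = N - t := by omega
          rw [e]
          exact Finset.prod_congr rfl fun s _ => by push_cast; ring_nf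
      _ = b * ∏ i ∈ Finset.range N, ((b-1) - (i:ℂ)) := by rw [ih (b-1) y]
      _ = ∏ i ∈ Finset.range (N+1), (b - (i:ℂ)) := by
          rw [Finset.prod_range_succ' (fun i => b - (i:ℂ)) N]
          have e : (∏ k ∈ Finset.range N, (b - ((k+1 : ℕ):ℂ))) = ∏ i ∈ Finset.range N, ((b-1) - (i:ℂ)) :=
            Finset.prod_congr rfl fun i _ => by push_cast; ring
          rw [e]
          push_cast
          ring

lemma prod_neg_aux (j : ℕ) (b : ℂ) :
    (-1:ℂ)^j * ∏ i ∈ Finset.range j, (-b + (i:ℂ)) = ∏ i ∈ Finset.range j, (b - (i:ℂ)) := by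
  induction j with
  | zero => simp
  | succ j ih =>
    rw [Finset.prod_range_succ, Finset.prod_range_succ, pow_succ, ← ih]
    ring

lemma prod_pairs {n : ℕ} (f : Fin n → Fin n → ℂ) :
    ∏ p ∈ Finset.univ.filter (fun p : Fin n × Fin n => p.1 < p.2), f p.1 p.2
      = ∏ i : Fin n, ∏ j ∈ Finset.Ioi i, f i j := by
  rw [Finset.prod_sigma']
  refine Finset.prod_nbij' (fun p => ⟨p.1, p.2⟩) (fun x => (x.1, x.2)) ?_ ?_ ?_ ?_ ?_ <;>
    simp [Finset.mem_Ioi, Finset.mem_filter]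


/-- Generalised Gamma-ratio determinant identity:
`det[Γ(z_k+b−j)/Γ(z_k−j)] = ∏_{j<k}(z_k−z_j) · ∏_j (−1)^j (−b)_j Γ(z_j+b−n+1)/Γ(z_j)`,
where `(−b)_j` is the Pochhammer symbol `(−b)(−b+1)⋯(−b+j−1)`. -/
theorem gamma_ratio_det_general (n : ℕ) (hn : 0 < n) (b : ℂ) (z : Fin n → ℂ)
    (hz : ∀ j k : Fin n, ∀ m : ℕ, z k + b - (j : ℂ) ≠ -(m : ℂ))
    (hz' : ∀ j k : Fin n, ∀ m : ℕ, z k - (j : ℂ) ≠ -(m : ℂ))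
    (hz'' : ∀ j : Fin n, ∀ m : ℕ, z j + b - (n : ℂ) + 1 ≠ -(m : ℂ))
    (hz''' : ∀ j : Fin n, ∀ m : ℕ, z j ≠ -(m : ℂ)) :
    Matrix.det (fun j k : Fin n =>
        Complex.Gamma (z k + b - (j : ℂ)) / Complex.Gamma (z k - (j : ℂ))) =
    (∏ p ∈ Finset.univ.filter (fun p : Fin n × Fin n => p.1 < p.2), (z p.2 - z p.1)) *
    ∏ j : Fin n, ((-1 : ℂ) ^ (j : ℕ) * (∏ i ∈ Finset.range j, (-b + (i : ℂ))) *
      Complex.Gamma (z j + b - (n : ℂ) + 1) / Complex.Gamma (z j)) := by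
  classical
  set G : Fin n → ℂ := fun k => Complex.Gamma (z k + b - (n:ℂ) + 1) / Complex.Gamma (z k) with hG
  set P : ℕ → ℂ → ℂ := fun l x =>
    (∏ s ∈ Finset.range (n-1-l), (x + b - ((l:ℂ)+1+(s:ℂ)))) *
      ∏ m ∈ Finset.range l, (x - ((m:ℂ)+1)) with hP
  set c : ℕ → ℂ := fun j => ∏ i ∈ Finset.range (n-1-j), (b - (i:ℂ)) with hc
  -- Step A : entry factorisation
  have entry : ∀ j k : Fin n,
      Complex.Gamma (z k + b - (j:ℂ)) / Complex.Gamma (z k - (j:ℂ)) = G k * P (j:ℕ) (z k) := by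
    intro j k
    have hjlt : (j:ℕ) < n := j.isLt
    have hjn : (j:ℕ) ≤ n - 1 := by omega
    have hcast : ((n - 1 - (j:ℕ) : ℕ) : ℂ) = (n:ℂ) - 1 - ((j:ℕ):ℂ) := by
      rw [show n - 1 - (j:ℕ) = n - ((j:ℕ)+1) from by omega, Nat.cast_sub (by omega)]
      push_cast; ring
    have htop : Complex.Gamma (z k + b - ((j:ℕ):ℂ)) =
        (∏ s ∈ Finset.range (n-1-(j:ℕ)), (z k + b - (((j:ℕ):ℂ)+1+(s:ℂ)))) *
          Complex.Gamma (z k + b - (n:ℂ) + 1) := by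
      have hne : ∀ i : ℕ, i < n-1-(j:ℕ) → z k + b - (n:ℂ) + 1 + (i:ℂ) ≠ 0 := by
        intro i hi h
        have h1 : n - 1 - i < n := by omega
        apply hz ⟨n-1-i, h1⟩ k 0
        have hcast2 : ((n - 1 - i : ℕ) : ℂ) = (n:ℂ) - 1 - (i:ℂ) := by
          rw [show n - 1 - i = n - (i+1) from by omega, Nat.cast_sub (by omega)]
          push_cast; ring
        show z k + b - ((n-1-i : ℕ):ℂ) = -((0:ℕ):ℂ)
        rw [hcast2]
        push_cast
        linear_combination h
      have hgs := gamma_shift (z k + b - (n:ℂ) + 1) (n-1-(j:ℕ)) hne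
      have harg : z k + b - (n:ℂ) + 1 + ((n-1-(j:ℕ) : ℕ):ℂ) = z k + b - ((j:ℕ):ℂ) := by
        rw [hcast]; ring
      rw [harg] at hgs
      rw [hgs]
      congr 1
      rw [← Finset.prod_range_reflect]
      refine Finset.prod_congr rfl fun s hs => ?_
      have hs' : s < n-1-(j:ℕ) := Finset.mem_range.mp hs
      have hc3 : ((n-1-(j:ℕ)-1-s : ℕ) : ℂ) = (n:ℂ) - 1 - ((j:ℕ):ℂ) - 1 - (s:ℂ) := by
        rw [show n-1-(j:ℕ)-1-s = n - ((j:ℕ)+s+2) from by omega, Nat.cast_sub (by omega)]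
        push_cast; ring
      rw [hc3]; ring
    have hbot : Complex.Gamma (z k) =
        (∏ m ∈ Finset.range (j:ℕ), (z k - ((m:ℂ)+1))) *
          Complex.Gamma (z k - ((j:ℕ):ℂ)) := by
      have hne : ∀ i : ℕ, i < (j:ℕ) → z k - ((j:ℕ):ℂ) + (i:ℂ) ≠ 0 := by
        intro i hi h
        have h1 : (j:ℕ) - i < n := by omega
        apply hz' ⟨(j:ℕ)-i, h1⟩ k 0
        have hcast2 : (((j:ℕ) - i : ℕ) : ℂ) = ((j:ℕ):ℂ) - (i:ℂ) := by
          rw [Nat.cast_sub (by omega)]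
        show z k - (((j:ℕ)-i : ℕ):ℂ) = -((0:ℕ):ℂ)
        rw [hcast2]
        push_cast
        linear_combination h
      have hgs := gamma_shift (z k - ((j:ℕ):ℂ)) (j:ℕ) hne
      have harg : z k - ((j:ℕ):ℂ) + (((j:ℕ) : ℕ):ℂ) = z k := by ring
      rw [harg] at hgs
      rw [hgs]
      congr 1
      rw [← Finset.prod_range_reflect]
      refine Finset.prod_congr rfl fun m hm => ?_
      have hm' : m < (j:ℕ) := Finset.mem_range.mp hm
      have hc3 : (((j:ℕ)-1-m : ℕ) : ℂ) = ((j:ℕ):ℂ) - 1 - (m:ℂ) := by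
        rw [show (j:ℕ)-1-m = (j:ℕ) - (m+1) from by omega, Nat.cast_sub (by omega)]
        push_cast; ring
      rw [hc3]; ring
    have hg1 : Complex.Gamma (z k - ((j:ℕ):ℂ)) ≠ 0 := Complex.Gamma_ne_zero (fun m => hz' j k m)
    have hg2 : Complex.Gamma (z k) ≠ 0 := Complex.Gamma_ne_zero (fun m => hz''' k m)
    have hBne : (∏ m ∈ Finset.range (j:ℕ), (z k - ((m:ℂ)+1))) ≠ 0 := by
      rw [Finset.prod_ne_zero_iff]
      intro m hm h0
      have hmn : m + 1 < n := by have := Finset.mem_range.mp hm; omega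
      apply hz' ⟨m+1, hmn⟩ k 0
      show z k - ((m+1 : ℕ):ℂ) = -((0:ℕ):ℂ)
      push_cast
      linear_combination h0
    simp only [hG, hP]
    rw [htop, hbot]
    field_simp
  -- Step B : pull out the Gamma factors
  have detB : Matrix.det (fun j k : Fin n =>
        Complex.Gamma (z k + b - (j : ℂ)) / Complex.Gamma (z k - (j : ℂ)))
      = (∏ k : Fin n, G k) * Matrix.det (Matrix.of fun j k : Fin n => P (j:ℕ) (z k)) := by
    have e : (fun j k : Fin n => Complex.Gamma (z k + b - (j:ℂ)) / Complex.Gamma (z k - (j:ℂ)))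
        = Matrix.of (fun j k : Fin n => G k * P (j:ℕ) (z k)) := by
      funext j k; exact entry j k
    rw [e]
    exact Matrix.det_mul_row G (fun j k => P (j:ℕ) (z k))
  -- Step C : row reduction
  have detC : Matrix.det (Matrix.of fun j k : Fin n => P (j:ℕ) (z k))
      = Matrix.det (Matrix.of fun j k : Fin n =>
          c (j:ℕ) * ∏ m ∈ Finset.range (j:ℕ), (z k - ((m:ℂ)+1))) := by
    set U : Matrix (Fin n) (Fin n) ℂ := Matrix.of fun j l : Fin n =>
      if (j:ℕ) ≤ (l:ℕ) then
        (-1:ℂ)^((l:ℕ)-(j:ℕ)) * (((n-1-(j:ℕ)).choose ((l:ℕ)-(j:ℕ)) : ℕ) : ℂ)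
      else 0 with hU
    have hcomb : ∀ (j : Fin n) (x : ℂ),
        (∑ l : Fin n, U j l * P (l:ℕ) x)
          = c (j:ℕ) * ∏ m ∈ Finset.range (j:ℕ), (x - ((m:ℂ)+1)) := by
      intro j x
      have hjlt : (j:ℕ) < n := j.isLt
      set N := n - 1 - (j:ℕ) with hN
      clear_value N
      have h0 : (∑ l : Fin n, U j l * P (l:ℕ) x)
          = ∑ l ∈ Finset.range n,
              (if (j:ℕ) ≤ l then
                (-1:ℂ)^(l-(j:ℕ)) * (((n-1-(j:ℕ)).choose (l-(j:ℕ)) : ℕ) : ℂ) else 0) * P l x := by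
        rw [← Fin.sum_univ_eq_sum_range (fun l =>
          (if (j:ℕ) ≤ l then
            (-1:ℂ)^(l-(j:ℕ)) * (((n-1-(j:ℕ)).choose (l-(j:ℕ)) : ℕ) : ℂ) else 0) * P l x) n]
        refine Finset.sum_congr rfl fun l _ => ?_
        simp only [hU, Matrix.of_apply]
      rw [h0]
      have e : n = (j:ℕ) + (N+1) := by omega
      have hsplit : ∀ (F : ℕ → ℂ), ∑ l ∈ Finset.range n, F l
          = (∑ l ∈ Finset.range (j:ℕ), F l) + ∑ t ∈ Finset.range (N+1), F ((j:ℕ)+t) := by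
        intro F
        have h := Finset.sum_range_add F (j:ℕ) (N+1)
        rw [← e] at h
        exact h
      rw [hsplit]
      have hz1 : (∑ l ∈ Finset.range (j:ℕ),
          (if (j:ℕ) ≤ l then
            (-1:ℂ)^(l-(j:ℕ)) * (((n-1-(j:ℕ)).choose (l-(j:ℕ)) : ℕ) : ℂ) else 0) * P l x) = 0 := by
        apply Finset.sum_eq_zero
        intro l hl
        rw [if_neg (by have := Finset.mem_range.mp hl; omega)]
        ring
      rw [hz1, zero_add]
      calc ∑ t ∈ Finset.range (N+1),
            (if (j:ℕ) ≤ (j:ℕ)+t then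
              (-1:ℂ)^((j:ℕ)+t-(j:ℕ)) *
                (((n-1-(j:ℕ)).choose ((j:ℕ)+t-(j:ℕ)) : ℕ):ℂ) else 0) * P ((j:ℕ)+t) x
          = ∑ t ∈ Finset.range (N+1), ((-1:ℂ)^t * ((N.choose t : ℕ):ℂ) *
              ((∏ s ∈ Finset.range (N-t), ((x - ((j:ℕ):ℂ)) + b - ((t:ℂ)+1+(s:ℂ)))) *
                ∏ m ∈ Finset.range t, ((x - ((j:ℕ):ℂ)) - ((m:ℂ)+1)))) *
            (∏ m ∈ Finset.range (j:ℕ), (x - ((m:ℂ)+1))) := by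
            refine Finset.sum_congr rfl fun t htm => ?_
            have ht : t ≤ N := by have := Finset.mem_range.mp htm; omega
            rw [if_pos (Nat.le_add_right _ _)]
            have e1 : (j:ℕ) + t - (j:ℕ) = t := by omega
            rw [e1]
            simp only [hP]
            have e2 : n - 1 - ((j:ℕ)+t) = N - t := by omega
            rw [e2, Finset.prod_range_add (fun m => x - ((m:ℂ)+1)) (j:ℕ) t]
            have p1 : (∏ s ∈ Finset.range (N-t), (x + b - ((((j:ℕ)+t : ℕ):ℂ)+1+(s:ℂ))))
                = ∏ s ∈ Finset.range (N-t), ((x - ((j:ℕ):ℂ)) + b - ((t:ℂ)+1+(s:ℂ))) :=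
              Finset.prod_congr rfl fun s _ => by push_cast; ring
            have p2 : (∏ m ∈ Finset.range t, (x - (((((j:ℕ)+m : ℕ)):ℂ)+1)))
                = ∏ m ∈ Finset.range t, ((x - ((j:ℕ):ℂ)) - ((m:ℂ)+1)) :=
              Finset.prod_congr rfl fun m _ => by push_cast; ring
            rw [p1, p2, ← hN]
            ring
        _ = (∑ t ∈ Finset.range (N+1), ((-1:ℂ)^t * ((N.choose t : ℕ):ℂ) *
              ((∏ s ∈ Finset.range (N-t), ((x - ((j:ℕ):ℂ)) + b - ((t:ℂ)+1+(s:ℂ)))) *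
                ∏ m ∈ Finset.range t, ((x - ((j:ℕ):ℂ)) - ((m:ℂ)+1))))) *
            (∏ m ∈ Finset.range (j:ℕ), (x - ((m:ℂ)+1))) := by
            rw [Finset.sum_mul]
        _ = (∏ i ∈ Finset.range N, (b - (i:ℂ))) * ∏ m ∈ Finset.range (j:ℕ), (x - ((m:ℂ)+1)) := by
            rw [key_sum N b (x - ((j:ℕ):ℂ))]
        _ = c (j:ℕ) * ∏ m ∈ Finset.range (j:ℕ), (x - ((m:ℂ)+1)) := by
            simp only [hc]
            rw [← hN]
    have hUP : U * (Matrix.of fun j k : Fin n => P (j:ℕ) (z k))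
        = Matrix.of (fun j k : Fin n =>
            c (j:ℕ) * ∏ m ∈ Finset.range (j:ℕ), (z k - ((m:ℂ)+1))) := by
      ext j k
      rw [Matrix.mul_apply]
      exact hcomb j (z k)
    have htri : U.BlockTriangular id := by
      intro i j hij
      have hlt : (j:ℕ) < (i:ℕ) := hij
      simp only [hU, Matrix.of_apply]
      rw [if_neg (by omega)]
    have hUdet : U.det = 1 := by
      rw [Matrix.det_of_upperTriangular htri]
      apply Finset.prod_eq_one
      intro j _
      simp only [hU, Matrix.of_apply]
      rw [if_pos (le_refl _)]
      simp
    calc (Matrix.of fun j k : Fin n => P (j:ℕ) (z k)).det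
        = U.det * (Matrix.of fun j k : Fin n => P (j:ℕ) (z k)).det := by rw [hUdet, one_mul]
      _ = (U * (Matrix.of fun j k : Fin n => P (j:ℕ) (z k))).det := (Matrix.det_mul _ _).symm
      _ = _ := by rw [hUP]
  -- Step D : pull out the constants c
  have detD : Matrix.det (Matrix.of fun j k : Fin n =>
        c (j:ℕ) * ∏ m ∈ Finset.range (j:ℕ), (z k - ((m:ℂ)+1)))
      = (∏ j : Fin n, c (j:ℕ)) *
        Matrix.det (Matrix.of fun j k : Fin n => ∏ m ∈ Finset.range (j:ℕ), (z k - ((m:ℂ)+1))) := by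
    exact Matrix.det_mul_column (fun j : Fin n => c j.val) _
  -- Step E : Vandermonde
  have detE : Matrix.det (Matrix.of fun j k : Fin n => ∏ m ∈ Finset.range (j:ℕ), (z k - ((m:ℂ)+1)))
      = ∏ i : Fin n, ∏ j ∈ Finset.Ioi i, (z j - z i) := by
    set p : Fin n → Polynomial ℂ :=
      fun j => ∏ m ∈ Finset.range (j:ℕ), (Polynomial.X - Polynomial.C ((m:ℂ)+1)) with hp
    have hmonic : ∀ j, (p j).Monic :=
      fun j => Polynomial.monic_prod_of_monic _ _ fun m _ => Polynomial.monic_X_sub_C _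
    have hdeg : ∀ j : Fin n, (p j).natDegree = (j:ℕ) := by
      intro j
      rw [hp]
      rw [Polynomial.natDegree_prod_of_monic _ _ (fun m _ => Polynomial.monic_X_sub_C _)]
      simp only [Polynomial.natDegree_X_sub_C, Finset.sum_const, smul_eq_mul, mul_one,
        Finset.card_range]
    have hvdm := Matrix.det_eval_matrixOfPolynomials_eq_det_vandermonde z p hdeg hmonic
    have e2 : (Matrix.of fun j k : Fin n => ∏ m ∈ Finset.range (j:ℕ), (z k - ((m:ℂ)+1)))
        = Matrix.transpose (Matrix.of fun i j : Fin n => (p j).eval (z i)) := by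
      ext j k
      simp [hp, Polynomial.eval_prod]
    rw [e2, Matrix.det_transpose, ← hvdm, Matrix.det_vandermonde]
  -- Step F : assemble
  rw [detB, detC, detD, detE]
  rw [prod_pairs (fun i j => z j - z i)]
  have hrhs : (∏ j : Fin n, ((-1:ℂ)^(j:ℕ) * (∏ i ∈ Finset.range (j:ℕ), (-b + (i:ℂ))) *
      Complex.Gamma (z j + b - (n:ℂ) + 1) / Complex.Gamma (z j)))
      = (∏ j : Fin n, (∏ i ∈ Finset.range (j:ℕ), (b - (i:ℂ)))) * ∏ k : Fin n, G k := by
    rw [← Finset.prod_mul_distrib]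
    refine Finset.prod_congr rfl fun j _ => ?_
    simp only [hG]
    rw [← prod_neg_aux (j:ℕ) b]
    ring
  rw [hrhs]
  have hrev : (∏ j : Fin n, c (j:ℕ)) = ∏ j : Fin n, (∏ i ∈ Finset.range (j:ℕ), (b - (i:ℂ))) := by
    rw [← Function.Bijective.prod_comp (Fin.rev_involutive.bijective)
      (fun j : Fin n => ∏ i ∈ Finset.range (j:ℕ), (b - (i:ℂ)))]
    refine Finset.prod_congr rfl fun j _ => ?_
    simp only [hc]
    have h2 : ((Fin.rev j) : ℕ) = n - ((j:ℕ)+1) := rfl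
    congr 1
    rw [h2]
    congr 1
    omega
  rw [hrev]
  ring
end
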